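/- arXiv:2105.03694 — 3 statements merged into one kernel-verified Lean document; each statement's English description precedes it below -/
import Mathlib

section
/- For any graph G, the Edge-compelling chromatic number of G is at least χ(G) and at most χ(G) + 2, provided G has at least one edge. -/
open SimpleGraph

/-- A proper coloring of `G` with `k` colors. -/
def ProperColoring {V : Type*} {k : ℕ} (G : SimpleGraph V) (c : V → Fin k) : Prop :=
  ∀ ⦃u v : V⦄, G.Adj u v → c u ≠ c v

/-- `f` selects a rainbow committee of the coloring `c`: one vertex of each color. -/
def IsRainbow {V : Type*} {k : ℕ} (c : V → Fin k) (f : Fin k → V) : Prop :=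
  ∀ i : Fin k, c (f i) = i

/-- The coloring `c` compels property `P`: every rainbow committee has property `P`. -/
def Compels {V : Type*} {k : ℕ} (c : V → Fin k) (P : Set V → Prop) : Prop :=
  ∀ f : Fin k → V, IsRainbow c f → P (Set.range f)

/-- The `P`-compelling chromatic number of `G`: the least number of colors in a proper
coloring, using every color, in which every rainbow committee has property `P`. -/
noncomputable def compellingChromNum {V : Type*} (G : SimpleGraph V) (P : Set V → Prop) : ℕ :=
  sInf {k : ℕ | ∃ c : V → Fin k,
    ProperColoring G c ∧ Function.Surjective c ∧ Compels c P}

/-- Property `Edge`: the set contains at least one edge of `G`. -/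
def HasEdge {V : Type*} (G : SimpleGraph V) (S : Set V) : Prop :=
  ∃ u ∈ S, ∃ v ∈ S, G.Adj u v

/-- The Edge-compelling chromatic number. -/
noncomputable def edgeCompellingChromNum {V : Type*} (G : SimpleGraph V) : ℕ :=
  compellingChromNum G (HasEdge G)

/-! Start from an optimal proper coloring and give the two ends `u`, `v` of an edge fresh
colors of their own. Any rainbow committee must then contain both `u` and `v`, hence the edge
`uv`. The new coloring uses at most `χ(G) + 2` colors, and after renumbering the colors that
actually occur it is surjective without changing its color classes. The lower bound holds for
any property: a coloring witnessing the compelling chromatic number is in particular proper. -/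

namespace SimpleGraph

variable {V : Type*} {G : SimpleGraph V} {k : ℕ}

def IsSingletonClass (c : V → Fin k) (x : V) : Prop :=
  ∀ w, c w = c x → w = x

theorem compels_hasEdge_of_isSingletonClass {c : V → Fin k} {u v : V} (huv : G.Adj u v)
    (hu : IsSingletonClass c u) (hv : IsSingletonClass c v) : Compels c (HasEdge G) :=
  fun _ hf ↦ ⟨u, ⟨c u, hu _ (hf (c u))⟩, v, ⟨c v, hv _ (hf (c v))⟩, huv⟩

def isolate [DecidableEq V] (c : V → Fin k) (x : V) : V → Fin (k + 1) :=
  fun w ↦ if w = x then Fin.last k else (c w).castSucc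

section Isolate

variable [DecidableEq V] {c : V → Fin k} {x : V}

theorem isolate_of_ne {w : V} (hw : w ≠ x) : isolate c x w = (c w).castSucc :=
  if_neg hw

theorem isolate_eq_last_iff {w : V} : isolate c x w = Fin.last k ↔ w = x := by
  by_cases hw : w = x
  · simp [isolate, hw]
  · simp [isolate_of_ne hw, hw, (Fin.castSucc_lt_last _).ne]

theorem eq_iff_of_isolate_eq {a b : V} (h : isolate c x a = isolate c x b) : a = x ↔ b = x := by
  rw [← isolate_eq_last_iff, h, isolate_eq_last_iff]

theorem ProperColoring.isolate (hc : ProperColoring G c) (x : V) :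
    ProperColoring G (isolate c x) := by
  intro a b hab h
  by_cases ha : a = x
  · exact G.ne_of_adj hab (ha.trans ((eq_iff_of_isolate_eq h).mp ha).symm)
  have hb : b ≠ x := mt (eq_iff_of_isolate_eq h).mpr ha
  rw [isolate_of_ne ha, isolate_of_ne hb] at h
  exact hc hab (Fin.castSucc_injective k h)

theorem isSingletonClass_isolate (c : V → Fin k) (x : V) : IsSingletonClass (isolate c x) x :=
  fun _ hw ↦ (eq_iff_of_isolate_eq hw).mpr rfl

theorem IsSingletonClass.isolate {y : V} (hy : IsSingletonClass c y) (hyx : y ≠ x) :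
    IsSingletonClass (isolate c x) y := by
  intro w hw
  have hwx : w ≠ x := mt (eq_iff_of_isolate_eq hw).mp hyx
  rw [isolate_of_ne hwx, isolate_of_ne hyx] at hw
  exact hy w (Fin.castSucc_injective k hw)

end Isolate

theorem exists_surjective_with_same_classes (c : V → Fin k) :
    ∃ m ≤ k, ∃ c' : V → Fin m, Function.Surjective c' ∧ ∀ w x, c' w = c' x ↔ c w = c x := by
  let e := Finite.equivFin (Set.range c)
  refine ⟨Nat.card (Set.range c), ?_, fun w ↦ e ⟨c w, w, rfl⟩, ?_, ?_⟩
  · exact (Finite.card_subtype_le (· ∈ Set.range c)).trans_eq (Nat.card_fin k)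
  · intro i
    obtain ⟨⟨_, w, rfl⟩, hw⟩ := e.surjective i
    exact ⟨w, hw⟩
  · intro w x
    rw [e.apply_eq_iff_eq, Subtype.ext_iff]

theorem exists_edgeCompelling_coloring_le {u v : V} (huv : G.Adj u v) (hG : G.Colorable k) :
    ∃ m ≤ k + 2, ∃ c : V → Fin m,
      ProperColoring G c ∧ Function.Surjective c ∧ Compels c (HasEdge G) := by
  classical
  obtain ⟨C⟩ := hG
  let c₂ := isolate (isolate C u) v
  have hproper : ProperColoring G c₂ :=
    ((show ProperColoring G C from fun _ _ h ↦ C.valid h).isolate u).isolate v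
  have hu : IsSingletonClass c₂ u := (isSingletonClass_isolate C u).isolate huv.ne
  have hv : IsSingletonClass c₂ v := isSingletonClass_isolate _ v
  obtain ⟨m, hm, c, hsurj, hclasses⟩ := exists_surjective_with_same_classes c₂
  refine ⟨m, hm, c, fun a b hab h ↦ hproper hab ((hclasses a b).mp h), hsurj, ?_⟩
  exact compels_hasEdge_of_isSingletonClass huv
    (fun w hw ↦ hu w ((hclasses w u).mp hw)) (fun w hw ↦ hv w ((hclasses w v).mp hw))

theorem compellingChromNum_le {P : Set V → Prop} {m : ℕ}
    (h : ∃ c : V → Fin m, ProperColoring G c ∧ Function.Surjective c ∧ Compels c P) :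
    compellingChromNum G P ≤ m :=
  Nat.sInf_le h

theorem chromaticNumber_le_compellingChromNum {P : Set V → Prop}
    (h : ∃ m, ∃ c : V → Fin m, ProperColoring G c ∧ Function.Surjective c ∧ Compels c P) :
    G.chromaticNumber ≤ compellingChromNum G P := by
  obtain ⟨c, hc, -⟩ := Nat.sInf_mem h
  exact Colorable.chromaticNumber_le ⟨Coloring.mk c fun hab ↦ hc hab⟩

end SimpleGraph

/-- For a graph with at least one edge, the Edge-compelling chromatic number is at least
`χ(G)` and at most `χ(G) + 2`. -/
theorem edgeCompellingChromNum_bounds {V : Type*} [Fintype V] (G : SimpleGraph V)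
    (hedge : ∃ u v : V, G.Adj u v) :
    G.chromaticNumber ≤ (edgeCompellingChromNum G : ℕ∞) ∧
      (edgeCompellingChromNum G : ℕ∞) ≤ G.chromaticNumber + 2 := by
  obtain ⟨u, v, huv⟩ := hedge
  have hχ := G.colorable_chromaticNumber_of_fintype
  obtain ⟨m, hm, hcompel⟩ := exists_edgeCompelling_coloring_le huv hχ
  refine ⟨chromaticNumber_le_compellingChromNum ⟨m, hcompel⟩, ?_⟩
  calc (edgeCompellingChromNum G : ℕ∞) ≤ m := by exact_mod_cast compellingChromNum_le hcompel
    _ ≤ (G.chromaticNumber.toNat + 2 : ℕ) := by exact_mod_cast hm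
    _ = G.chromaticNumber + 2 := by
      rw [Nat.cast_add, ENat.natCast_toNat (chromaticNumber_ne_top_iff_exists.mpr ⟨_, hχ⟩)]
      rfl
end

section
/- The Edge-compelling chromatic number of the cycle C_n is 2 for n = 4; it is 3 for n = 3, 5, 6, 7; and it is 4 for all n ≥ 8. -/
open SimpleGraph

/-!
An independent set meeting every colour class once is the same thing as a rainbow committee
without an edge. For `n ≥ 4`, giving the adjacent vertices `0` and `1` private colours and
alternating two further colours along the path `2, …, n - 1` forces the edge `01` into every
committee, so four colours suffice. Two colours never suffice for `n ≥ 5`: the ends of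
an induced path on four vertices get different colours. Three colours never suffice for
`n ≥ 8`: some three consecutive vertices carry all three colours (otherwise the colouring is
invariant under the shift by two and uses only two colours), and the induced path on seven
vertices starting there always contains an independent rainbow triple. The cycles with at most
seven vertices are settled by exhaustive search.
-/

open Function

instance (n : ℕ) : DecidableRel (pathGraph n).Adj :=
  fun _ _ => decidable_of_iff' _ pathGraph_adj

instance {V : Type*} [Fintype V] {k : ℕ} (G : SimpleGraph V) [DecidableRel G.Adj]
    (c : V → Fin k) : Decidable (ProperColoring G c) := by
  unfold ProperColoring; infer_instance

section Rainbow

variable {V W : Type*} {k : ℕ} {G : SimpleGraph V} {c : V → Fin k}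

def HasIndepRainbow (G : SimpleGraph V) (c : V → Fin k) : Prop :=
  ∃ x : Fin k → V, Injective (c ∘ x) ∧ ∀ i j, ¬G.Adj (x i) (x j)

instance [Fintype V] [DecidableEq V] [DecidableRel G.Adj] : Decidable (HasIndepRainbow G c) := by
  unfold HasIndepRainbow; infer_instance

theorem compels_hasEdge_iff : Compels c (HasEdge G) ↔ ¬HasIndepRainbow G c := by
  constructor
  · rintro hc ⟨x, hinj, hind⟩
    let e := Equiv.ofBijective (c ∘ x) (Finite.injective_iff_bijective.1 hinj)
    obtain ⟨_, ⟨i, rfl⟩, _, ⟨j, rfl⟩, hij⟩ := hc (x ∘ e.symm) (e.apply_symm_apply ·)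
    exact hind _ _ hij
  · intro hc f hf
    by_contra hne
    refine hc ⟨f, fun i j hij => (hf i).symm.trans (hij.trans (hf j)), fun i j hij => ?_⟩
    exact hne ⟨f i, ⟨i, rfl⟩, f j, ⟨j, rfl⟩, hij⟩

theorem HasIndepRainbow.of_embedding {H : SimpleGraph W} (e : H ↪g G)
    (h : HasIndepRainbow H (c ∘ e)) : HasIndepRainbow G c :=
  let ⟨x, hinj, hind⟩ := h
  ⟨e ∘ x, hinj, fun i j => by simpa using hind i j⟩

theorem ProperColoring.comp (hc : ProperColoring G c) {H : SimpleGraph W} (f : H →g G) :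
    ProperColoring H (c ∘ f) :=
  fun _ _ huv => hc (f.map_adj huv)

theorem ProperColoring.two_le (hc : ProperColoring G c) {u v : V} (huv : G.Adj u v) : 2 ≤ k := by
  by_contra! hk
  have := Fin.subsingleton_iff_le_one.2 (Nat.le_of_lt_succ hk)
  exact hc huv (Subsingleton.elim _ _)

theorem compels_hasEdge_of_adj {u v : V} (huv : G.Adj u v) (hu : ∀ w, c w = c u → w = u)
    (hv : ∀ w, c w = c v → w = v) : Compels c (HasEdge G) :=
  fun _ hf => ⟨u, ⟨c u, hu _ (hf _)⟩, v, ⟨c v, hv _ (hf _)⟩, huv⟩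

theorem edgeCompellingChromNum_eq_of {m : ℕ}
    (hm : ∃ c : V → Fin m, ProperColoring G c ∧ Surjective c ∧ ¬HasIndepRainbow G c)
    (hlt : ∀ k < m, ∀ c : V → Fin k,
      ProperColoring G c → Surjective c → HasIndepRainbow G c) :
    edgeCompellingChromNum G = m := by
  simp only [edgeCompellingChromNum, compellingChromNum, compels_hasEdge_iff] at hm ⊢
  refine le_antisymm (Nat.sInf_le hm) (le_csInf ⟨m, hm⟩ fun k ⟨c, hc, hs, hind⟩ => ?_)
  exact not_lt.1 fun hk => hind (hlt k hk c hc hs)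

end Rainbow

theorem hasIndepRainbow_pathGraph_four {c : Fin 4 → Fin 2} (hc : ProperColoring (pathGraph 4) c) :
    HasIndepRainbow (pathGraph 4) c := by
  have key : ∀ c : Fin 4 → Fin 2, (∀ i : Fin 3, c i.castSucc ≠ c i.succ) →
      Injective (c ∘ ![0, 3]) := by
    decide
  exact ⟨![0, 3], key c fun i => hc (pathGraph_adj.2 (Or.inl rfl)), by decide⟩

theorem hasIndepRainbow_pathGraph_seven {c : Fin 7 → Fin 3} (hc : ProperColoring (pathGraph 7) c)
    (h02 : c 0 ≠ c 2) : HasIndepRainbow (pathGraph 7) c := by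
  -- If the colour of `1` recurs at `4`, `5` or `6`, pair it with `0` and `2`; otherwise
  -- `3, …, 6` follow one of three patterns, each handled by one of the last three triples.
  have key : ∀ c : Fin 7 → Fin 3, (∀ i : Fin 6, c i.castSucc ≠ c i.succ) → c 0 ≠ c 2 →
      ∃ x ∈ [![0, 2, 4], ![0, 2, 5], ![0, 2, 6], ![0, 3, 5], ![0, 3, 6], ![1, 3, 6]],
        Injective (c ∘ x) ∧ ∀ i j, ¬(pathGraph 7).Adj (x i) (x j) := by
    decide +kernel
  obtain ⟨x, -, hx⟩ := key c (fun i => hc (pathGraph_adj.2 (Or.inl rfl))) h02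
  exact ⟨x, hx⟩

section Cycle

variable {n : ℕ}

theorem SimpleGraph.cycleGraph_adj_iff_val (hn : 2 ≤ n) {u v : Fin n} :
    (cycleGraph n).Adj u v ↔ u.val + 1 = v.val ∨ v.val + 1 = u.val ∨
      (u.val = 0 ∧ v.val + 1 = n) ∨ (v.val = 0 ∧ u.val + 1 = n) := by
  rw [cycleGraph_adj']
  rcases lt_trichotomy u v with h | rfl | h
  · rw [Fin.coe_sub_iff_lt.2 h, Fin.sub_val_of_le h.le, Fin.lt_def] at *
    omega
  · rw [Fin.sub_val_of_le le_rfl]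
    omega
  · rw [Fin.coe_sub_iff_lt.2 h, Fin.sub_val_of_le h.le, Fin.lt_def] at *
    omega

theorem SimpleGraph.cycleGraph_adj_add_left [NeZero n] {u v w : Fin n} :
    (cycleGraph n).Adj (w + u) (w + v) ↔ (cycleGraph n).Adj u v := by
  simp only [cycleGraph_adj', add_sub_add_left_eq_sub]

def SimpleGraph.cycleGraph.pathEmbedding {m : ℕ} (h : m < n) (v : Fin n) :
    pathGraph m ↪g cycleGraph n where
  toFun i := v + Fin.castLE h.le i
  inj' _ _ hij := Fin.castLE_injective _ (add_left_cancel hij)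
  map_rel_iff' {i j} := by
    have hn : 2 ≤ n := by have := i.isLt; omega
    have : NeZero n := ⟨by omega⟩
    show (cycleGraph n).Adj (v + _) (v + _) ↔ _
    rw [cycleGraph_adj_add_left, pathGraph_adj, cycleGraph_adj_iff_val hn]
    simp only [Fin.val_castLE]
    omega

@[simp]
theorem SimpleGraph.cycleGraph.pathEmbedding_apply {m : ℕ} (h : m < n) (v : Fin n) (i : Fin m) :
    cycleGraph.pathEmbedding h v i = v + Fin.castLE h.le i :=
  rfl

open Fin.NatCast in
theorem exists_ne_add_two [NeZero n] {c : Fin n → Fin 3} (hc : Surjective c) :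
    ∃ v, c v ≠ c (v + 2) := by
  by_contra! h
  have two_colours (i : ℕ) : c i = c 0 ∨ c i = c 1 := by
    induction i using Nat.twoStepInduction with
    | zero => simp
    | one => simp
    | more i hi _ => rwa [Nat.cast_add, Nat.cast_ofNat, ← h]
  obtain ⟨d, hd0, hd1⟩ : ∃ d : Fin 3, d ≠ c 0 ∧ d ≠ c 1 := by
    generalize c 0 = a, c 1 = b
    revert a b
    decide
  obtain ⟨v, rfl⟩ := hc d
  simpa [hd0, hd1] using two_colours v

theorem hasIndepRainbow_cycleGraph_of_lt_three (hn : 5 ≤ n) {k : ℕ} (hk : k < 3)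
    {c : Fin n → Fin k} (hc : ProperColoring (cycleGraph n) c) :
    HasIndepRainbow (cycleGraph n) c := by
  let e := cycleGraph.pathEmbedding (m := 4) (n := n) (by omega) ⟨0, by omega⟩
  obtain rfl : k = 2 := by
    have := hc.two_le (e.map_adj_iff.2 (by decide : (pathGraph 4).Adj 0 1))
    omega
  exact .of_embedding e (hasIndepRainbow_pathGraph_four (hc.comp e.toHom))

theorem hasIndepRainbow_cycleGraph_of_surjective (hn : 8 ≤ n) {c : Fin n → Fin 3}
    (hc : ProperColoring (cycleGraph n) c) (hs : Surjective c) :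
    HasIndepRainbow (cycleGraph n) c := by
  have : NeZero n := ⟨by omega⟩
  obtain ⟨v, hv⟩ := exists_ne_add_two hs
  let e := cycleGraph.pathEmbedding (m := 7) (by omega) v
  refine .of_embedding e (hasIndepRainbow_pathGraph_seven (hc.comp e.toHom) ?_)
  have he0 : e 0 = v := by simp [e, Fin.ext_iff]
  have he2 : e 2 = v + 2 := by simp [e, Fin.ext_iff, Nat.mod_eq_of_lt (by omega : 2 < n)]
  simpa [he0, he2] using hv

theorem exists_four_coloring_not_hasIndepRainbow_cycleGraph (hn : 4 ≤ n) :
    ∃ c : Fin n → Fin 4, ProperColoring (cycleGraph n) c ∧ Surjective c ∧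
      ¬HasIndepRainbow (cycleGraph n) c := by
  let c : Fin n → Fin 4 := fun v =>
    if v.val = 0 then 2 else if v.val = 1 then 3 else if v.val % 2 = 0 then 0 else 1
  refine ⟨c, fun u v huv => ?_, fun b => ?_, compels_hasEdge_iff.1 <|
    compels_hasEdge_of_adj (u := ⟨0, by omega⟩) (v := ⟨1, by omega⟩) ?_ ?_ ?_⟩
  · rw [cycleGraph_adj_iff_val (by omega)] at huv
    have := u.isLt
    have := v.isLt
    simp only [c]
    split_ifs <;> first | decide | omega
  · fin_cases b
    · exact ⟨⟨2, by omega⟩, by simp [c]⟩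
    · exact ⟨⟨3, by omega⟩, by simp [c]⟩
    · exact ⟨⟨0, by omega⟩, by simp [c]⟩
    · exact ⟨⟨1, by omega⟩, by simp [c]⟩
  · exact (cycleGraph_adj_iff_val (by omega)).2 (Or.inl rfl)
  all_goals
    intro w hw
    simp only [c, Fin.ext_iff] at hw ⊢
    split_ifs at hw <;> simp_all

end Cycle

/-- The Edge-compelling chromatic number of the cycle `C_n` is 2 for `n = 4`,
3 for `n = 3, 5, 6, 7`, and 4 for `n ≥ 8`. -/
theorem edgeCompellingChromNum_cycleGraph :
    edgeCompellingChromNum (cycleGraph 4) = 2 ∧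
    edgeCompellingChromNum (cycleGraph 3) = 3 ∧
    edgeCompellingChromNum (cycleGraph 5) = 3 ∧
    edgeCompellingChromNum (cycleGraph 6) = 3 ∧
    edgeCompellingChromNum (cycleGraph 7) = 3 ∧
    ∀ n : ℕ, 8 ≤ n → edgeCompellingChromNum (cycleGraph n) = 4 := by
  refine ⟨?_, ?_, ?_, ?_, ?_, fun n hn => ?_⟩
  · refine edgeCompellingChromNum_eq_of
      ⟨![0, 1, 0, 1], by decide, by decide, by decide +kernel⟩ fun k hk c hc _ => ?_
    exact absurd (hc.two_le (by decide : (cycleGraph 4).Adj 0 1)) (by omega)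
  · refine edgeCompellingChromNum_eq_of
      ⟨![0, 1, 2], by decide, by decide, by decide +kernel⟩ fun k hk c hc _ => ?_
    obtain rfl : k = 2 := by have := hc.two_le (by decide : (cycleGraph 3).Adj 0 1); omega
    exact absurd hc (by revert c; decide)
  · exact edgeCompellingChromNum_eq_of
      ⟨![0, 1, 0, 1, 2], by decide, by decide, by decide +kernel⟩
      fun _ hk _ hc _ => hasIndepRainbow_cycleGraph_of_lt_three le_rfl hk hc
  · exact edgeCompellingChromNum_eq_of
      ⟨![0, 1, 0, 1, 2, 1], by decide, by decide, by decide +kernel⟩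
      fun _ hk _ hc _ => hasIndepRainbow_cycleGraph_of_lt_three (by norm_num) hk hc
  · exact edgeCompellingChromNum_eq_of
      ⟨![0, 1, 0, 1, 2, 1, 2], by decide, by decide, by decide +kernel⟩
      fun _ hk _ hc _ => hasIndepRainbow_cycleGraph_of_lt_three (by norm_num) hk hc
  · refine edgeCompellingChromNum_eq_of
      (exists_four_coloring_not_hasIndepRainbow_cycleGraph (by omega)) fun k hk c hc hs => ?_
    obtain hk | rfl := Nat.lt_succ_iff_lt_or_eq.1 hk
    · exact hasIndepRainbow_cycleGraph_of_lt_three (by omega) hk hc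
    · exact hasIndepRainbow_cycleGraph_of_surjective hn hc hs
end

section
/- A connected graph G on n ≥ 2 vertices has Connected-compelling chromatic number equal to n if and only if G is complete. -/
/-! If `G` is complete, a proper coloring is injective, so it needs all `n` colors, and the
coloring by vertex names has `V` itself as its only rainbow committee. If `G` is connected but not
complete, pick `u`, `v` realizing the diameter: they are non-adjacent, and deleting either one
leaves `G` connected, because a shortest path from `v` to another vertex never passes through the
vertex `u` farthest from `v`. Giving `u` and `v` a common color and every other vertex its own
color is then a proper coloring with `n - 1` colors whose rainbow committees are exactly `V - u`
and `V - v`. -/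

open SimpleGraph

/-- Property `Connected`: the set induces a connected subgraph of `G`. -/
def InducesConnected {V : Type*} (G : SimpleGraph V) (S : Set V) : Prop :=
  (G.induce S).Connected

/-- The Connected-compelling chromatic number. -/
noncomputable def connCompellingChromNum {V : Type*} (G : SimpleGraph V) : ℕ :=
  compellingChromNum G (InducesConnected G)

namespace SimpleGraph

variable {V : Type*} {G : SimpleGraph V}

theorem Connected.induce_compl_singleton_of_dist_le (hG : G.Connected) {u v : V} (hne : u ≠ v)
    (hfar : ∀ w, G.dist v w ≤ G.dist v u) : (G.induce {u}ᶜ).Connected := by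
  classical
  refine induce_connected_of_patches v hne.symm fun {w} (hw : w ≠ u) => ?_
  obtain ⟨p, hp⟩ := hG.exists_walk_length_eq_dist v w
  have hu : u ∉ p.support := fun hu => by
    have := (G.dist_le (p.takeUntil u hu)).trans_lt (p.length_takeUntil_lt_length hu hw.symm)
    have := hfar w
    omega
  exact ⟨{x | x ∈ p.support}, fun x hx (hxu : x = u) => hu (hxu ▸ hx), p.start_mem_support,
    p.end_mem_support, p.connected_induce_support.preconnected _ _⟩

theorem Connected.exists_not_adj_induce_compl_singleton_connected [Finite V] (hG : G.Connected)
    (hG' : G ≠ ⊤) : ∃ u v, u ≠ v ∧ ¬G.Adj u v ∧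
      (G.induce {u}ᶜ).Connected ∧ (G.induce {v}ᶜ).Connected := by
  have : Nontrivial V := not_subsingleton_iff_nontrivial.mp fun _ => hG' (Subsingleton.elim _ _)
  have hdiam : ∀ x y, G.dist x y ≤ G.diam := fun x y =>
    dist_le_diam (connected_iff_ediam_ne_top.mp hG)
  obtain ⟨u, v, huv⟩ := G.exists_dist_eq_diam (α := V)
  have hdiam0 := connected_iff_diam_ne_zero.mp hG
  have hdiam1 := diam_eq_one.not.mpr hG'
  have hne : u ≠ v := by rintro rfl; exact hdiam0 (by rw [← huv, dist_self])
  refine ⟨u, v, hne, fun h => hdiam1 (huv ▸ dist_eq_one_iff_adj.mpr h), ?_, ?_⟩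
  · exact hG.induce_compl_singleton_of_dist_le hne fun w =>
      (hdiam v w).trans (huv.symm.trans G.dist_comm).le
  · exact hG.induce_compl_singleton_of_dist_le hne.symm fun w => (hdiam u w).trans huv.symm.le

end SimpleGraph

section Compelling

variable {V : Type*}

open Function

def CompellingColorable (G : SimpleGraph V) (P : Set V → Prop) (k : ℕ) : Prop :=
  ∃ c : V → Fin k, ProperColoring G c ∧ Surjective c ∧ Compels c P

namespace CompellingColorable

variable {G : SimpleGraph V} {P : Set V → Prop} {k : ℕ}

theorem compellingChromNum_le (h : CompellingColorable G P k) : compellingChromNum G P ≤ k :=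
  Nat.sInf_le h

theorem of_coloring {β : Type*} [Fintype β] (g : G.Coloring β) (hg : Surjective g)
    (hP : ∀ s : β → V, RightInverse s g → P (Set.range s)) :
    CompellingColorable G P (Fintype.card β) := by
  let e := Fintype.equivFin β
  refine ⟨e ∘ g, fun _ _ h => e.injective.ne (g.valid h), e.surjective.comp hg,
    fun f hf => ?_⟩
  have := hP (f ∘ e) fun b => e.injective (hf (e b))
  rwa [Set.range_comp, e.range_eq_univ, Set.image_univ] at this

theorem card_le_of_top [Fintype V] (h : CompellingColorable (⊤ : SimpleGraph V) P k) :
    Fintype.card V ≤ k := by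
  obtain ⟨c, hc, -, -⟩ := h
  simpa using Fintype.card_le_of_injective c fun x y hxy => by_contra fun hne => hc hne hxy

end CompellingColorable

theorem compellingColorable_compellingChromNum {G : SimpleGraph V} {P : Set V → Prop}
    (h : ∃ k, CompellingColorable G P k) : CompellingColorable G P (compellingChromNum G P) :=
  Nat.sInf_mem h

theorem compellingColorable_inducesConnected_card [Fintype V] {G : SimpleGraph V}
    (hG : G.Connected) : CompellingColorable G (InducesConnected G) (Fintype.card V) :=
  .of_coloring G.selfColoring surjective_id fun s hs => by
    rw [show s = id from funext hs, Set.range_id]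
    exact (induceUnivIso G).connected_iff.mpr hG

theorem connCompellingChromNum_top [Fintype V] [Nonempty V] :
    connCompellingChromNum (⊤ : SimpleGraph V) = Fintype.card V :=
  have h := compellingColorable_inducesConnected_card (connected_top (V := V))
  le_antisymm h.compellingChromNum_le
    (compellingColorable_compellingChromNum ⟨_, h⟩).card_le_of_top

section Collapse

variable {u v : V}

open Classical in
noncomputable def collapse (hne : u ≠ v) (w : V) : {w : V // w ≠ v} :=
  if h : w = v then ⟨u, hne⟩ else ⟨w, h⟩

theorem collapse_of_ne (hne : u ≠ v) {w : V} (hw : w ≠ v) : collapse hne w = ⟨w, hw⟩ :=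
  dif_neg hw

open Classical in
theorem coe_collapse (hne : u ≠ v) (w : V) : (collapse hne w : V) = if w = v then u else w := by
  unfold collapse; split_ifs <;> rfl

theorem range_eq_compl_singleton_of_rightInverse_collapse {hne : u ≠ v}
    {s : {w : V // w ≠ v} → V} (hs : RightInverse s (collapse hne)) :
    Set.range s = {u}ᶜ ∨ Set.range s = {v}ᶜ := by
  have hrange (w : V) : w ∈ Set.range s ↔ s (collapse hne w) = w :=
    ⟨by rintro ⟨b, rfl⟩; rw [hs b], fun h => ⟨_, h⟩⟩
  have hsec (b : {w : V // w ≠ v}) : s b = b ∨ s b = v ∧ (b : V) = u := by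
    have := congrArg Subtype.val (hs b)
    rw [coe_collapse] at this
    split_ifs at this <;> simp_all
  rcases hsec ⟨u, hne⟩ with h | ⟨h, -⟩ <;> [right; left] <;> ext w <;> rw [hrange] <;>
    by_cases hwv : w = v
  · simp [collapse, hwv, h, hne]
  · grind [hsec ⟨w, hwv⟩, collapse]
  · simp [collapse, hwv, h, hne.symm]
  · grind [hsec ⟨w, hwv⟩, collapse]

end Collapse

theorem compellingColorable_card_sub_one [Fintype V] {G : SimpleGraph V} {P : Set V → Prop}
    {u v : V} (hne : u ≠ v) (hadj : ¬G.Adj u v) (hu : P {u}ᶜ) (hv : P {v}ᶜ) :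
    CompellingColorable G P (Fintype.card V - 1) := by
  classical
  have hcard : Fintype.card {w : V // w ≠ v} = Fintype.card V - 1 := by
    simp [Fintype.card_subtype_compl]
  have hproper {x y : V} (hxy : G.Adj x y) : collapse hne x ≠ collapse hne y := fun heq => by
    have := congrArg Subtype.val heq
    rw [coe_collapse, coe_collapse] at this
    split_ifs at this <;> grind [G.ne_of_adj, G.adj_symm]
  rw [← hcard]
  refine .of_coloring (Coloring.mk (collapse hne) hproper)
    (fun b => ⟨b, collapse_of_ne hne b.2⟩) fun s hs => ?_
  rcases range_eq_compl_singleton_of_rightInverse_collapse hs with h | h <;> rw [h] <;> assumption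

end Compelling

theorem connCompellingChromNum_eq_card_iff_general {V : Type*} [Fintype V] (G : SimpleGraph V)
    (hconn : G.Connected) :
    connCompellingChromNum G = Fintype.card V ↔ G = ⊤ := by
  refine ⟨fun h => by_contra fun hG => ?_, ?_⟩
  · obtain ⟨u, v, hne, hadj, hu, hv⟩ :=
      hconn.exists_not_adj_induce_compl_singleton_connected hG
    have hle := (compellingColorable_card_sub_one (P := InducesConnected G) hne hadj hu hv)
      |>.compellingChromNum_le
    have hpos := Fintype.card_pos_iff.mpr hconn.nonempty
    rw [connCompellingChromNum] at h
    omega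
  · rintro rfl
    have := hconn.nonempty
    exact connCompellingChromNum_top

/-- A connected graph on `n ≥ 2` vertices has Connected-compelling chromatic number `n`
iff it is complete. -/
theorem connCompellingChromNum_eq_card_iff {V : Type*} [Fintype V] (G : SimpleGraph V)
    (hconn : G.Connected) (hcard : 2 ≤ Fintype.card V) :
    connCompellingChromNum G = Fintype.card V ↔ G = ⊤ :=
  connCompellingChromNum_eq_card_iff_general G hconn
end
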